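/- For integers a, b, and z = a + √2·b ∈ Z[ω]: gde(z, √2) is even if and only if gde(b, 2) ≥ gde(a, 2), in which case gde(a, 2) = gde(z, √2)/2; and gde(z, √2) is odd if and only if gde(b, 2) < gde(a, 2), in which case gde(b, 2) = (gde(z, √2) − 1)/2. -/

import Mathlib

noncomputable section

open Complex

/-- The eighth root of unity ω = e^{iπ/4}. -/
def omg : ℂ := Complex.exp (Real.pi * Complex.I / 4)

/-- √2 as a complex number. -/
def rt2 : ℂ := (Real.sqrt 2 : ℝ)

/-- Membership in the ring Z[ω] = {a + bω + cω² + dω³ : a,b,c,d ∈ ℤ}. -/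
def Zomega (z : ℂ) : Prop :=
  ∃ a b c d : ℤ, z = a + b * omg + c * omg ^ 2 + d * omg ^ 3

/-- Membership in the ring Z[1/√2, i] = {u/(√2)^n : u ∈ Z[ω], n ∈ ℕ}. -/
def ZRoot2i (z : ℂ) : Prop :=
  ∃ u : ℂ, Zomega u ∧ ∃ n : ℕ, z = u / rt2 ^ n

/-- `b` divides `z` within the ring Z[ω]. -/
def ZDvd (b z : ℂ) : Prop := ∃ q : ℂ, Zomega q ∧ z = b * q

/-- `k` is the greatest dividing exponent of base `b` with respect to `z`:
`b^k` divides `z` in Z[ω], while `b^(k+1)` does not. -/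
def IsGde (b z : ℂ) (k : ℕ) : Prop := ZDvd (b ^ k) z ∧ ¬ ZDvd (b ^ (k + 1)) z

/-- `k` is the smallest denominator exponent of base √2 with respect to `z`:
the smallest integer `k` such that `z·(√2)^k ∈ Z[ω]`. -/
def IsSde (z : ℂ) (k : ℤ) : Prop :=
  Zomega (z * rt2 ^ k) ∧ ∀ j : ℤ, Zomega (z * rt2 ^ j) → k ≤ j

/-! Since `(√2)² = 2`, dividing `a + √2 b` by `(√2)^(2m)` gives `a/2^m + √2 · b/2^m`, and by
`(√2)^(2m+1)` gives `b/2^m + √2 · a/2^(m+1)`. An element `x + √2 y` with `x, y ∈ ℚ` lies in `Z[ω]`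
exactly when `x, y ∈ ℤ`, so `(√2)^(2m) ∣ z` iff `2^m` divides both `a` and `b`, and
`(√2)^(2m+1) ∣ z` iff `2^(m+1) ∣ a` and `2^m ∣ b`. Reading off the largest such exponent gives
the valuations of `a` and `b`. -/

lemma rt2_sq : rt2 ^ 2 = 2 := by
  rw [rt2, ← Complex.ofReal_pow, Real.sq_sqrt zero_le_two, Complex.ofReal_ofNat]

lemma rt2_ne_zero : rt2 ≠ 0 := fun h => by simpa [h] using rt2_sq

lemma omg_eq : omg = rt2 / 2 * (1 + I) := by
  have h : (↑Real.pi * I / 4 : ℂ) = ((Real.pi / 4 : ℝ) : ℂ) * I := by push_cast; ring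
  rw [omg, h, Complex.exp_mul_I, ← Complex.ofReal_cos, ← Complex.ofReal_sin,
    Real.cos_pi_div_four, Real.sin_pi_div_four, rt2]
  push_cast
  ring

lemma omg_sq : omg ^ 2 = I := by
  rw [omg_eq]
  linear_combination ((1 + I) ^ 2 / 4) * rt2_sq + (1 / 2) * I_sq

lemma omg_cube : omg ^ 3 = rt2 / 2 * (-1 + I) := by
  rw [pow_succ, omg_sq, omg_eq]
  linear_combination (rt2 / 2) * I_sq

lemma Irrational.eq_zero_of_ratCast_add_ratCast_mul_eq_zero {t : ℝ} (ht : Irrational t)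
    {p q : ℚ} (h : (p : ℝ) + q * t = 0) : p = 0 ∧ q = 0 := by
  obtain rfl : q = 0 := by
    by_contra hq
    exact ((ht.ratCast_mul hq).ratCast_add p).ne_zero h
  simpa using h

lemma zomega_intCast_add_rt2_mul (n m : ℤ) : Zomega ((n : ℂ) + rt2 * m) :=
  ⟨n, m, 0, -m, by rw [omg_cube, omg_eq]; push_cast; ring⟩

/-- The coordinates of `ω`, `ω²`, `ω³` are `(√2/2)(1 + i)`, `i`, `(√2/2)(-1 + i)`, so comparing
real and imaginary parts over the basis `1, √2` of `ℚ(√2)` pins down the coefficients. -/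
lemma zomega_ratCast_add_rt2_mul_iff (x y : ℚ) :
    Zomega ((x : ℂ) + rt2 * y) ↔ ∃ n m : ℤ, x = n ∧ y = m := by
  refine ⟨fun ⟨c₀, c₁, c₂, c₃, h⟩ => ?_, fun ⟨n, m, hx, hy⟩ => ?_⟩
  · rw [omg_sq, omg_cube, omg_eq, rt2] at h
    simp only [Complex.ext_iff, add_re, add_im, mul_re, mul_im, div_re, div_im, ofReal_re,
      ofReal_im, intCast_re, intCast_im, ratCast_re, ratCast_im, I_re, I_im, one_re, one_im,
      neg_re, neg_im, re_ofNat, im_ofNat, normSq_ofNat] at h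
    obtain ⟨-, hc⟩ := irrational_sqrt_two.eq_zero_of_ratCast_add_ratCast_mul_eq_zero
      (p := c₂) (q := (c₁ + c₃) / 2) (by push_cast; linarith [h.2])
    obtain ⟨hx, hy⟩ := irrational_sqrt_two.eq_zero_of_ratCast_add_ratCast_mul_eq_zero
      (p := x - c₀) (q := y - (c₁ - c₃) / 2) (by push_cast; linarith [h.1])
    exact ⟨c₀, c₁, by linarith, by linarith⟩
  · simpa [hx, hy] using zomega_intCast_add_rt2_mul n m

lemma zdvd_iff_zomega_div {c z : ℂ} (hc : c ≠ 0) : ZDvd c z ↔ Zomega (z / c) :=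
  ⟨fun ⟨q, hq, h⟩ => by rwa [h, mul_div_cancel_left₀ _ hc],
    fun h => ⟨z / c, h, (mul_div_cancel₀ z hc).symm⟩⟩

lemma Int.exists_intCast_eq_ratCast_div_iff {a d : ℤ} (hd : d ≠ 0) :
    (∃ n : ℤ, (a : ℚ) / d = n) ↔ d ∣ a := by
  refine ⟨fun ⟨n, hn⟩ => ⟨n, ?_⟩, fun ⟨n, hn⟩ => ⟨n, ?_⟩⟩
  · rw [div_eq_iff (by exact_mod_cast hd)] at hn
    exact_mod_cast hn.trans (mul_comm _ _)
  · rw [hn, Int.cast_mul, mul_div_cancel_left₀ _ (by exact_mod_cast hd)]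

lemma zdvd_rt2_pow_two_mul_iff (a b : ℤ) (m : ℕ) :
    ZDvd (rt2 ^ (2 * m)) ((a : ℂ) + rt2 * b) ↔ 2 ^ m ∣ a ∧ 2 ^ m ∣ b := by
  have hd : (2 : ℤ) ^ m ≠ 0 := pow_ne_zero _ two_ne_zero
  have hdiv : ((a : ℂ) + rt2 * b) / rt2 ^ (2 * m)
      = (((a : ℚ) / ((2 ^ m : ℤ) : ℚ) : ℚ) : ℂ) + rt2 * (((b : ℚ) / ((2 ^ m : ℤ) : ℚ) : ℚ) : ℂ) := by
    rw [pow_mul, rt2_sq]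
    push_cast
    ring
  rw [zdvd_iff_zomega_div (pow_ne_zero _ rt2_ne_zero), hdiv, zomega_ratCast_add_rt2_mul_iff,
    ← exists_and_exists_comm, Int.exists_intCast_eq_ratCast_div_iff hd,
    Int.exists_intCast_eq_ratCast_div_iff hd]

lemma zdvd_rt2_pow_two_mul_add_one_iff (a b : ℤ) (m : ℕ) :
    ZDvd (rt2 ^ (2 * m + 1)) ((a : ℂ) + rt2 * b) ↔ 2 ^ (m + 1) ∣ a ∧ 2 ^ m ∣ b := by
  have hd : ∀ k : ℕ, (2 : ℤ) ^ k ≠ 0 := fun k => pow_ne_zero _ two_ne_zero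
  have hdiv : ((a : ℂ) + rt2 * b) / rt2 ^ (2 * m + 1)
      = (((b : ℚ) / ((2 ^ m : ℤ) : ℚ) : ℚ) : ℂ)
        + rt2 * (((a : ℚ) / ((2 ^ (m + 1) : ℤ) : ℚ) : ℚ) : ℂ) := by
    rw [pow_succ, pow_mul, rt2_sq]
    have := rt2_ne_zero
    push_cast
    field_simp
    linear_combination (-(2 ^ m * (a : ℂ))) * rt2_sq
  rw [zdvd_iff_zomega_div (pow_ne_zero _ rt2_ne_zero), hdiv, zomega_ratCast_add_rt2_mul_iff,
    ← exists_and_exists_comm, Int.exists_intCast_eq_ratCast_div_iff (hd m),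
    Int.exists_intCast_eq_ratCast_div_iff (hd (m + 1)), and_comm]

lemma IsGde.emultiplicity_of_even {a b : ℤ} {m : ℕ}
    (h : IsGde rt2 ((a : ℂ) + rt2 * b) (2 * m)) :
    emultiplicity 2 a = m ∧ emultiplicity 2 a ≤ emultiplicity 2 b := by
  obtain ⟨ha, hb⟩ := (zdvd_rt2_pow_two_mul_iff a b m).1 h.1
  have ha' : ¬ 2 ^ (m + 1) ∣ a := fun ha' =>
    h.2 ((zdvd_rt2_pow_two_mul_add_one_iff a b m).2 ⟨ha', hb⟩)
  have hm : emultiplicity 2 a = m := emultiplicity_eq_coe.2 ⟨ha, ha'⟩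
  exact ⟨hm, hm ▸ pow_dvd_iff_le_emultiplicity.1 hb⟩

lemma IsGde.emultiplicity_of_odd {a b : ℤ} {m : ℕ}
    (h : IsGde rt2 ((a : ℂ) + rt2 * b) (2 * m + 1)) :
    emultiplicity 2 b = m ∧ emultiplicity 2 b < emultiplicity 2 a := by
  obtain ⟨ha, hb⟩ := (zdvd_rt2_pow_two_mul_add_one_iff a b m).1 h.1
  have hb' : ¬ 2 ^ (m + 1) ∣ b := fun hb' =>
    h.2 ((zdvd_rt2_pow_two_mul_iff a b (m + 1)).2 ⟨ha, hb'⟩)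
  have hm : emultiplicity 2 b = m := emultiplicity_eq_coe.2 ⟨hb, hb'⟩
  refine ⟨hm, hm ▸ lt_of_lt_of_le ?_ (pow_dvd_iff_le_emultiplicity.1 ha)⟩
  exact_mod_cast m.lt_succ_self

theorem stmt13_general (a b : ℤ) (g : ℕ)
    (hg : IsGde rt2 ((a : ℂ) + rt2 * (b : ℂ)) g) :
    (Even g ↔ emultiplicity (2 : ℤ) a ≤ emultiplicity (2 : ℤ) b) ∧
    (Even g → emultiplicity (2 : ℤ) a = (g / 2 : ℕ)) ∧
    (¬Even g ↔ emultiplicity (2 : ℤ) b < emultiplicity (2 : ℤ) a) ∧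
    (¬Even g → emultiplicity (2 : ℤ) b = ((g - 1) / 2 : ℕ)) := by
  obtain ⟨m, rfl | rfl⟩ := Nat.even_or_odd' g
  · obtain ⟨ha, hle⟩ := hg.emultiplicity_of_even
    have heven : Even (2 * m) := even_two_mul m
    refine ⟨iff_of_true heven hle, fun _ => ?_, iff_of_false (not_not.2 heven) hle.not_gt,
      fun h => absurd heven h⟩
    rw [ha, Nat.mul_div_cancel_left m two_pos]
  · obtain ⟨hb, hlt⟩ := hg.emultiplicity_of_odd
    have hodd : ¬Even (2 * m + 1) := Nat.not_even_iff_odd.2 (odd_two_mul_add_one m)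
    refine ⟨iff_of_false hodd hlt.not_ge, fun h => absurd h hodd, iff_of_true hodd hlt,
      fun _ => ?_⟩
    rw [hb, Nat.add_sub_cancel, Nat.mul_div_cancel_left m two_pos]

/-- For z = a + √2·b with integers a, b: gde(z, √2) is even iff
gde(b, 2) ≥ gde(a, 2), in which case gde(a, 2) = gde(z, √2)/2; and gde(z, √2)
is odd iff gde(b, 2) < gde(a, 2), in which case gde(b, 2) = (gde(z, √2) − 1)/2. -/
theorem stmt13 (a b : ℤ) (hab : ¬(a = 0 ∧ b = 0)) (g : ℕ)
    (hg : IsGde rt2 ((a : ℂ) + rt2 * (b : ℂ)) g) :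
    (Even g ↔ emultiplicity (2 : ℤ) a ≤ emultiplicity (2 : ℤ) b) ∧
    (Even g → emultiplicity (2 : ℤ) a = (g / 2 : ℕ)) ∧
    (¬Even g ↔ emultiplicity (2 : ℤ) b < emultiplicity (2 : ℤ) a) ∧
    (¬Even g → emultiplicity (2 : ℤ) b = ((g - 1) / 2 : ℕ)) :=
  stmt13_general a b g hg
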